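/- Write v = aτ − b with a, b ∈ ℝ and y = Im τ > 0. Then the differential operator ∂/∂a + τ ∂/∂b applied to R_{j;m+1}(τ, v) equals −4√((m+1)y) e^{−4π(m+1)a²y} Θ_{j,m+1}(−τ̄, 2v̄), where Θ_{j,m+1}(τ,z) = Σ_{n∈ℤ} e^{2πi(m+1)z(n+j/(2(m+1)))} e^{2πiτ(m+1)(n+j/(2(m+1)))²} and bar denotes complex conjugation. -/

import Mathlib

/-!
Write `R = ∑ₖ cₖ(a) eₖ(aτ - b)`, where `cₖ(a) = sgn(…) - E((n + 2(m+1)a)√(y/(m+1)))` is real and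
`eₖ(v) = exp(-πin²τ/(2(m+1)) - 2πinv)` is holomorphic in `v` (here `n = -j + 2(m+1)k`).
Since `∂/∂a + τ ∂/∂b` kills every function holomorphic in `v = aτ - b`, applied termwise it only
differentiates the coefficients, and `cₖ'(a) = -4√((m+1)y) e^{-πx²}`. Completing the square,
`-πx² - πin²τ/(2(m+1)) - 2πinv = -4π(m+1)a²y - πin²τ̄/(2(m+1)) - 2πinv̄`, which is the `-k`-th
term of `Θ_{j,m+1}(-τ̄, 2v̄)` times `e^{-4π(m+1)a²y}`.

Termwise differentiation is justified by the Gaussian tail `|sgn - E(x)| ≲ e^{-πx²}`: for the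
finitely many `k` where the sign disagrees with that of `x` the argument is bounded, and otherwise
`e^{-πx²}` beats the growth of `|eₖ|`, leaving a Jacobi theta majorant `e^{-π(Tn² - 2S|n|)}`.
-/

noncomputable section

open Complex

/-- Zwegers-type error function `E(x) = 2∫₀ˣ e^{−πu²} du`. -/
def Efun (x : ℝ) : ℝ := 2 * ∫ u in (0 : ℝ)..x, Real.exp (-Real.pi * u ^ 2)

/-- The modified Zwegers function `R_{j;m+1}(τ,v)`: the sum over `n ≡ −j mod 2(m+1)`,
parametrized by `n = −j + 2(m+1)k`, `k ∈ ℤ`. -/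
def Rz (m : ℕ) (j : ℤ) (τ v : ℂ) : ℂ :=
  ∑' k : ℤ,
    (((Real.sign (((-j + 2 * ((m : ℤ) + 1) * k : ℤ) : ℝ) + 1 / 2 + (j : ℝ) - 2 * ((m : ℝ) + 1)) -
        Efun ((((-j + 2 * ((m : ℤ) + 1) * k : ℤ) : ℝ) + 2 * ((m : ℝ) + 1) * (v.im / τ.im)) *
          Real.sqrt (τ.im / ((m : ℝ) + 1)))) : ℝ) : ℂ) *
      Complex.exp (-(Real.pi : ℂ) * I * ((-j + 2 * ((m : ℤ) + 1) * k : ℤ) : ℂ) ^ 2 * τ /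
          (2 * ((m : ℂ) + 1)) -
        2 * (Real.pi : ℂ) * I * ((-j + 2 * ((m : ℤ) + 1) * k : ℤ) : ℂ) * v)

/-- The classical theta function `Θ_{j,m₁}(τ,z)` of degree `m₁`. -/
def Theta (j : ℤ) (m₁ : ℕ) (τ z : ℂ) : ℂ :=
  ∑' n : ℤ,
    Complex.exp (2 * (Real.pi : ℂ) * I * (m₁ : ℂ) * z * ((n : ℂ) + (j : ℂ) / (2 * (m₁ : ℂ)))) *
      Complex.exp (2 * (Real.pi : ℂ) * I * τ * (m₁ : ℂ) * ((n : ℂ) + (j : ℂ) / (2 * (m₁ : ℂ))) ^ 2)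

open MeasureTheory Set Metric Real

lemma integral_Ioi_exp_neg_mul_sq_le {b x : ℝ} (hb : 0 < b) (hx : 0 ≤ x) :
    ∫ u in Ioi x, rexp (-b * u ^ 2) ≤ rexp (-b * x ^ 2) * (√(π / b) / 2) := by
  have hshift : ∫ u in Ioi x, rexp (-b * u ^ 2) = ∫ t in Ioi 0, rexp (-b * (t + x) ^ 2) := by
    rw [← (measurePreserving_add_right volume x).setIntegral_preimage_emb
      (measurableEmbedding_addRight x), preimage_add_const_Ioi, sub_self]
  rw [hshift, ← integral_gaussian_Ioi, ← integral_const_mul]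
  refine setIntegral_mono_on ?_ ?_ measurableSet_Ioi fun t (ht : 0 < t) ↦ ?_
  · refine Integrable.mono'
      ((integrable_exp_neg_mul_sq hb).integrableOn.const_mul (rexp (-b * x ^ 2))) (by fun_prop) ?_
    filter_upwards [ae_restrict_mem measurableSet_Ioi] with t (ht : 0 < t)
    rw [norm_of_nonneg (exp_pos _).le, ← Real.exp_add, exp_le_exp]
    nlinarith [mul_nonneg (mul_nonneg hb.le ht.le) hx]
  · exact (integrable_exp_neg_mul_sq hb).integrableOn.const_mul _
  · rw [← Real.exp_add, exp_le_exp]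
    nlinarith [mul_nonneg (mul_nonneg hb.le ht.le) hx]

lemma hasDerivAt_Efun (x : ℝ) : HasDerivAt Efun (2 * rexp (-π * x ^ 2)) x :=
  ((by fun_prop : Continuous fun u ↦ rexp (-π * u ^ 2)).integral_hasStrictDerivAt 0 x
    |>.hasDerivAt.const_mul 2)

lemma Efun_neg (x : ℝ) : Efun (-x) = -Efun x := by
  simp only [Efun]
  rw [← neg_zero, ← intervalIntegral.integral_comp_neg, intervalIntegral.integral_symm]
  simp

lemma Efun_eq_one_sub_integral_Ioi (x : ℝ) :
    Efun x = 1 - 2 * ∫ u in Ioi x, rexp (-π * u ^ 2) := by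
  have hint : ∀ s, IntegrableOn (fun u ↦ rexp (-π * u ^ 2)) s :=
    fun s ↦ (integrable_exp_neg_mul_sq pi_pos).integrableOn
  have := intervalIntegral.integral_interval_add_Ioi (hint (Ioi 0)) (hint (Ioi x))
  rw [integral_gaussian_Ioi, div_self pi_ne_zero, Real.sqrt_one] at this
  rw [Efun]
  linarith

lemma Efun_le_one (x : ℝ) : Efun x ≤ 1 := by
  have : 0 ≤ ∫ u in Ioi x, rexp (-π * u ^ 2) :=
    setIntegral_nonneg measurableSet_Ioi fun u _ ↦ (exp_pos _).le
  linarith [Efun_eq_one_sub_integral_Ioi x]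

lemma abs_Efun_le_one (x : ℝ) : |Efun x| ≤ 1 :=
  abs_le.mpr ⟨by linarith [Efun_neg x ▸ Efun_le_one (-x)], Efun_le_one x⟩

lemma one_sub_Efun_le {x : ℝ} (hx : 0 ≤ x) : 1 - Efun x ≤ rexp (-π * x ^ 2) := by
  have := integral_Ioi_exp_neg_mul_sq_le pi_pos hx
  rw [div_self pi_ne_zero, Real.sqrt_one] at this
  rw [Efun_eq_one_sub_integral_Ioi]
  linarith

lemma abs_one_sub_Efun_le {x M : ℝ} (hx : -M ≤ x) :
    |1 - Efun x| ≤ 2 * rexp (π * M ^ 2) * rexp (-π * x ^ 2) := by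
  rw [abs_of_nonneg (by linarith [Efun_le_one x]), mul_assoc, ← Real.exp_add]
  rcases le_or_gt 0 x with h0 | h0
  · calc 1 - Efun x ≤ rexp (-π * x ^ 2) := one_sub_Efun_le h0
      _ ≤ 2 * rexp (π * M ^ 2 + -π * x ^ 2) := by
        have : rexp (-π * x ^ 2) ≤ rexp (π * M ^ 2 + -π * x ^ 2) :=
          exp_le_exp.mpr (by nlinarith [pi_pos, sq_nonneg M])
        linarith [exp_pos (-π * x ^ 2)]
  · have hxM : x ^ 2 ≤ M ^ 2 := by nlinarith
    have : 1 ≤ rexp (π * M ^ 2 + -π * x ^ 2) := one_le_exp (by nlinarith [pi_pos])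
    linarith [abs_le.mp (abs_Efun_le_one x)]

lemma abs_neg_one_sub_Efun_le {x M : ℝ} (hx : -M ≤ -x) :
    |-1 - Efun x| ≤ 2 * rexp (π * M ^ 2) * rexp (-π * x ^ 2) := by
  have hodd : |-1 - Efun x| = |1 - Efun (-x)| := by
    rw [Efun_neg, ← abs_neg]
    ring_nf
  rw [hodd, ← neg_sq x]
  exact abs_one_sub_Efun_le hx

lemma hasDerivAt_ofReal_mul_sub (τ : ℂ) (s t : ℝ) :
    HasDerivAt (fun t : ℝ ↦ (t : ℂ) * τ - s) τ t := by
  simpa using ((hasDerivAt_id t).ofReal_comp.mul_const τ).sub_const (s : ℂ)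

lemma hasDerivAt_mul_sub_ofReal (τ : ℂ) (t s : ℝ) :
    HasDerivAt (fun s : ℝ ↦ (t : ℂ) * τ - s) (-1) s := by
  simpa using ((hasDerivAt_id s).ofReal_comp).const_sub ((t : ℂ) * τ)

/-- The operator `∂/∂a + τ ∂/∂b` annihilates `e (aτ - b)` for holomorphic `e`, so on a series
`∑ cₖ(a) eₖ(aτ - b)` it only differentiates the coefficients. -/
lemma deriv_add_mul_deriv_tsum {ι : Type*} {c c' : ι → ℝ → ℂ} {e e' : ι → ℂ → ℂ} {u : ι → ℝ}
    {τ : ℂ} {a b : ℝ} (hu : Summable u)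
    (hc : ∀ k t, HasDerivAt (c k) (c' k t) t) (he : ∀ k v, HasDerivAt (e k) (e' k v) v)
    (h₀ : Summable fun k ↦ c k a * e k (a * τ - b))
    (hc' : ∀ k, ∀ t ∈ ball a 1, ‖c' k t * e k (t * τ - b)‖ ≤ u k)
    (he' : ∀ k, ∀ t ∈ ball a 1, ∀ s : ℝ, ‖c k t * e' k (t * τ - s)‖ ≤ u k) :
    deriv (fun t : ℝ ↦ ∑' k, c k t * e k (t * τ - b)) a +
        τ * deriv (fun s : ℝ ↦ ∑' k, c k a * e k (a * τ - s)) b =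
      ∑' k, c' k a * e k (a * τ - b) := by
  have ha : a ∈ ball a 1 := mem_ball_self one_pos
  have hA : HasDerivAt (fun t : ℝ ↦ ∑' k, c k t * e k (t * τ - b))
      (∑' k, (c' k a * e k (a * τ - b) + τ * (c k a * e' k (a * τ - b)))) a := by
    refine hasDerivAt_tsum_of_isPreconnected (g := fun k t ↦ c k t * e k (t * τ - b))
      (g' := fun k t ↦ c' k t * e k (t * τ - b) + τ * (c k t * e' k (t * τ - b)))
      (hu.mul_left (1 + ‖τ‖)) isOpen_ball
      (convex_ball a 1).isPreconnected (fun k t _ ↦ ?_) (fun k t ht ↦ ?_) ha h₀ ha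
    · exact ((hc k t).mul ((he k _).comp t (hasDerivAt_ofReal_mul_sub τ b t))).congr_deriv
        (by simp only [Function.comp_apply]; ring)
    · calc _ ≤ ‖c' k t * e k (t * τ - b)‖ + ‖τ‖ * ‖c k t * e' k (t * τ - b)‖ :=
            (norm_add_le _ _).trans_eq (by rw [norm_mul τ])
        _ ≤ u k + ‖τ‖ * u k := by gcongr; exacts [hc' k t ht, he' k t ht b]
        _ = (1 + ‖τ‖) * u k := by ring
  have hB : HasDerivAt (fun s : ℝ ↦ ∑' k, c k a * e k (a * τ - s))
      (∑' k, -(c k a * e' k (a * τ - b))) b := by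
    refine hasDerivAt_tsum (g := fun k (s : ℝ) ↦ c k a * e k (a * τ - s))
      (g' := fun k (s : ℝ) ↦ -(c k a * e' k (a * τ - s))) hu (fun k s ↦ ?_) (fun k s ↦ ?_) h₀ b
    · exact (((he k _).comp s (hasDerivAt_mul_sub_ofReal τ a s)).const_mul (c k a)).congr_deriv
        (by ring)
    · simpa using he' k a ha s
  have hsA : Summable fun k ↦ c' k a * e k (a * τ - b) := hu.of_norm_bounded (hc' · a ha)
  have hsB : Summable fun k ↦ c k a * e' k (a * τ - b) := hu.of_norm_bounded (he' · a ha b)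
  rw [hA.deriv, hB.deriv, hsA.tsum_add (hsB.mul_left τ), tsum_mul_left, tsum_neg]
  ring

namespace Rz

variable (m : ℕ) (j : ℤ) (τ : ℂ)

/- The `k`-th summand of `Rz m j τ v` is `coeff k (v.im / τ.im) * expTerm k v`, and
`v.im / τ.im = t` at `v = tτ - s`. -/

def index (k : ℤ) : ℤ := -j + 2 * ((m : ℤ) + 1) * k

def erfArg (k : ℤ) (t : ℝ) : ℝ :=
  ((index m j k : ℝ) + 2 * ((m : ℝ) + 1) * t) * √(τ.im / ((m : ℝ) + 1))

def coeff (k : ℤ) (t : ℝ) : ℝ :=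
  Real.sign ((index m j k : ℝ) + 1 / 2 + j - 2 * ((m : ℝ) + 1)) - Efun (erfArg m j τ k t)

def expTerm (k : ℤ) (v : ℂ) : ℂ :=
  cexp (-(π : ℂ) * I * (index m j k : ℂ) ^ 2 * τ / (2 * ((m : ℂ) + 1)) -
    2 * π * I * (index m j k : ℂ) * v)

/- The Jacobi theta majorant of `summable_pow_mul_jacobiTheta₂_term_bound`, evaluated at
`n = index k`; it dominates the terms for `|t| ≤ A`. -/
def decay (A : ℝ) (k : ℤ) : ℝ :=
  rexp (-π * (τ.im / (2 * ((m : ℝ) + 1)) * (index m j k : ℝ) ^ 2 -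
    2 * (A * τ.im) * |(index m j k : ℝ)|))

lemma eq_tsum {τ : ℂ} (hτ : τ.im ≠ 0) (t s : ℝ) :
    Rz m j τ (t * τ - s) = ∑' k, (coeff m j τ k t : ℂ) * expTerm m j τ k (t * τ - s) := by
  have him : (t * τ - s : ℂ).im / τ.im = t := by simp [hτ]
  simp only [Rz, him]
  rfl

lemma index_injective : Function.Injective (index m j) := fun k l h ↦ by
  simp only [index] at h
  nlinarith

lemma summable_decay {τ : ℂ} (hτ : 0 < τ.im) (A C₀ C₁ : ℝ) :
    Summable fun k ↦ (C₀ + C₁ * |(index m j k : ℝ)|) * decay m j τ A k := by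
  have hT : 0 < τ.im / (2 * ((m : ℝ) + 1)) := by positivity
  have h := ((summable_pow_mul_jacobiTheta₂_term_bound (A * τ.im) hT 0).mul_left C₀).add
    ((summable_pow_mul_jacobiTheta₂_term_bound (A * τ.im) hT 1).mul_left C₁)
  refine (h.comp_injective (index_injective m j)).congr fun k ↦ ?_
  simp only [decay, Function.comp_apply, pow_zero, pow_one, Int.cast_abs]
  ring

lemma hasDerivAt_expTerm (k : ℤ) (v : ℂ) :
    HasDerivAt (expTerm m j τ k) (-2 * π * I * index m j k * expTerm m j τ k v) v := by
  have h := ((hasDerivAt_id v).const_mul (2 * π * I * (index m j k : ℂ))).const_sub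
    (-(π : ℂ) * I * (index m j k : ℂ) ^ 2 * τ / (2 * ((m : ℂ) + 1)))
  exact h.cexp.congr_deriv (by simp only [expTerm, id]; ring)

lemma hasDerivAt_coeff (k : ℤ) (t : ℝ) :
    HasDerivAt (coeff m j τ k)
      (-4 * √(((m : ℝ) + 1) * τ.im) * rexp (-π * erfArg m j τ k t ^ 2)) t := by
  have hc : (0 : ℝ) < (m : ℝ) + 1 := by positivity
  have harg : HasDerivAt (erfArg m j τ k) (2 * ((m : ℝ) + 1) * √(τ.im / ((m : ℝ) + 1))) t :=
    (((hasDerivAt_id t).const_mul _).const_add _).mul_const _ |>.congr_deriv (by ring)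
  have hsqrt : ((m : ℝ) + 1) * √(τ.im / ((m : ℝ) + 1)) = √(((m : ℝ) + 1) * τ.im) := by
    rw [show ((m : ℝ) + 1) * τ.im = ((m : ℝ) + 1) ^ 2 * (τ.im / ((m : ℝ) + 1)) by field_simp,
      Real.sqrt_mul (sq_nonneg _), Real.sqrt_sq hc.le]
  refine ((hasDerivAt_Efun _).comp t harg).const_sub _ |>.congr_deriv ?_
  rw [← hsqrt]
  ring

lemma norm_expTerm (k : ℤ) (t s : ℝ) :
    ‖expTerm m j τ k (t * τ - s)‖ =
      rexp (π * τ.im * ((index m j k : ℝ) ^ 2 / (2 * ((m : ℝ) + 1)) + 2 * index m j k * t)) := by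
  have hc : (2 * ((m : ℂ) + 1)) ≠ 0 := by norm_cast
  rw [expTerm, norm_exp, show -(π : ℂ) * I * (index m j k : ℂ) ^ 2 * τ / (2 * ((m : ℂ) + 1)) -
      2 * π * I * (index m j k : ℂ) * (t * τ - s) =
      ((-π * (index m j k : ℝ) ^ 2 / (2 * ((m : ℝ) + 1)) - 2 * π * index m j k * t : ℝ) : ℂ) * τ * I
        + ((2 * π * index m j k * s : ℝ) : ℂ) * I by push_cast; ring]
  simp only [add_re, mul_I_re, im_ofReal_mul, ofReal_im, neg_zero, add_zero]
  ring_nf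

lemma exp_neg_sq_erfArg_mul_norm_expTerm_le {τ : ℂ} (hy : 0 ≤ τ.im) {A t : ℝ} (ht : |t| ≤ A)
    (k : ℤ) (s : ℝ) :
    rexp (-π * erfArg m j τ k t ^ 2) * ‖expTerm m j τ k (t * τ - s)‖ ≤ decay m j τ A k := by
  have hc : (0 : ℝ) < (m : ℝ) + 1 := by positivity
  rw [norm_expTerm, ← Real.exp_add, decay, exp_le_exp, erfArg, mul_pow,
    sq_sqrt (div_nonneg hy hc.le)]
  set n : ℝ := ((index m j k : ℤ) : ℝ)
  have hnt : -(|n| * A) ≤ n * t := by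
    have := neg_abs_le (n * t)
    rw [abs_mul] at this
    linarith [mul_le_mul_of_nonneg_left ht (abs_nonneg n)]
  have key : -π * ((n + 2 * ((m : ℝ) + 1) * t) ^ 2 * (τ.im / ((m : ℝ) + 1))) +
      π * τ.im * (n ^ 2 / (2 * ((m : ℝ) + 1)) + 2 * n * t) =
      -π * (τ.im / (2 * ((m : ℝ) + 1)) * n ^ 2 + 2 * τ.im * (n * t) +
        4 * ((m : ℝ) + 1) * τ.im * t ^ 2) := by
    field_simp
    ring
  rw [key]
  have := mul_nonneg (mul_nonneg hc.le hy) (sq_nonneg t)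
  nlinarith [pi_pos, mul_le_mul_of_nonneg_left hnt hy]

lemma exists_abs_coeff_le (A : ℝ) :
    ∃ C ≥ 0, ∀ k t, |t| ≤ A → |coeff m j τ k t| ≤ C * rexp (-π * erfArg m j τ k t ^ 2) := by
  have hc : (0 : ℝ) < (m : ℝ) + 1 := by positivity
  set q := √(τ.im / ((m : ℝ) + 1))
  have hq : 0 ≤ q := sqrt_nonneg _
  refine ⟨2 * rexp (π * ((|(j : ℝ)| + 2 * ((m : ℝ) + 1) * A) * q) ^ 2), by positivity,
    fun k t ht ↦ ?_⟩
  have hidx : (index m j k : ℝ) = -j + 2 * ((m : ℝ) + 1) * k := by push_cast [index]; ring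
  obtain ⟨hj, hj'⟩ : -|(j : ℝ)| ≤ j ∧ (j : ℝ) ≤ |(j : ℝ)| := abs_le.mp le_rfl
  obtain ⟨ht, ht'⟩ := abs_le.mp ht
  rw [coeff, erfArg, hidx, show -(j : ℝ) + 2 * ((m : ℝ) + 1) * k + 1 / 2 + j - 2 * ((m : ℝ) + 1)
    = 2 * ((m : ℝ) + 1) * (k - 1) + 1 / 2 by ring]
  rcases le_or_gt 1 k with hk | hk
  · have hk' : (1 : ℝ) ≤ k := by exact_mod_cast hk
    rw [Real.sign_of_pos (by nlinarith)]
    refine abs_one_sub_Efun_le ?_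
    rw [← neg_mul]
    refine mul_le_mul_of_nonneg_right ?_ hq
    nlinarith
  · have hk' : (k : ℝ) ≤ 0 := by exact_mod_cast (by omega : k ≤ 0)
    rw [Real.sign_of_neg (by nlinarith)]
    refine abs_neg_one_sub_Efun_le ?_
    rw [← neg_mul, ← neg_mul]
    refine mul_le_mul_of_nonneg_right ?_ hq
    nlinarith

lemma deriv_add_mul_deriv_eq_tsum {τ : ℂ} (hy : 0 < τ.im) (a b : ℝ) :
    deriv (fun t : ℝ ↦ Rz m j τ (t * τ - b)) a + τ * deriv (fun s : ℝ ↦ Rz m j τ (a * τ - s)) b =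
      ∑' k, ((-4 * √(((m : ℝ) + 1) * τ.im) * rexp (-π * erfArg m j τ k a ^ 2) : ℝ) : ℂ) *
        expTerm m j τ k (a * τ - b) := by
  obtain ⟨C, hC0, hC⟩ := exists_abs_coeff_le m j τ (|a| + 1)
  have hball : ∀ t ∈ ball a 1, |t| ≤ |a| + 1 := fun t ht ↦ by
    rw [mem_ball, Real.dist_eq] at ht
    linarith [abs_sub_abs_le_abs_sub t a]
  have hdecay : ∀ t ∈ ball a 1, ∀ k (s : ℝ),
      rexp (-π * erfArg m j τ k t ^ 2) * ‖expTerm m j τ k (t * τ - s)‖ ≤ decay m j τ (|a| + 1) k :=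
    fun t ht ↦ exp_neg_sq_erfArg_mul_norm_expTerm_le m j hy.le (hball t ht)
  have hcoeff : ∀ t ∈ ball a 1, ∀ k, |coeff m j τ k t| ≤ C * rexp (-π * erfArg m j τ k t ^ 2) :=
    fun t ht k ↦ hC k t (hball t ht)
  have ha : a ∈ ball a 1 := mem_ball_self one_pos
  simp_rw [eq_tsum m j hy.ne']
  refine deriv_add_mul_deriv_tsum
    (summable_decay m j hy (|a| + 1) (4 * √(((m : ℝ) + 1) * τ.im)) (2 * π * C))
    (fun k t ↦ (hasDerivAt_coeff m j τ k t).ofReal_comp) (hasDerivAt_expTerm m j τ)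
    ((summable_decay m j hy (|a| + 1) C 0).of_norm_bounded fun k ↦ ?_)
    (fun k t ht ↦ ?_) (fun k t ht s ↦ ?_)
  · calc ‖(coeff m j τ k a : ℂ) * expTerm m j τ k (a * τ - b)‖
        = |coeff m j τ k a| * ‖expTerm m j τ k (a * τ - b)‖ := by
          rw [norm_mul, norm_real, norm_eq_abs]
      _ ≤ C * rexp (-π * erfArg m j τ k a ^ 2) * ‖expTerm m j τ k (a * τ - b)‖ := by
        gcongr
        exact hcoeff a ha k
      _ ≤ C * decay m j τ (|a| + 1) k := by
        rw [mul_assoc]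
        gcongr
        exact hdecay a ha k b
      _ = _ := by ring
  · calc _ = 4 * √(((m : ℝ) + 1) * τ.im) *
            (rexp (-π * erfArg m j τ k t ^ 2) * ‖expTerm m j τ k (t * τ - b)‖) := by
          have := exp_pos (-π * erfArg m j τ k t ^ 2)
          rw [norm_mul, norm_real, norm_eq_abs, abs_of_nonpos (by
            nlinarith [sqrt_nonneg (((m : ℝ) + 1) * τ.im)])]
          ring
      _ ≤ 4 * √(((m : ℝ) + 1) * τ.im) * decay m j τ (|a| + 1) k := by
          gcongr
          exact hdecay t ht k b
      _ ≤ _ := mul_le_mul_of_nonneg_right (le_add_of_nonneg_right (by positivity)) (exp_pos _).le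
  · calc _ = |coeff m j τ k t| * (2 * π * |(index m j k : ℝ)|) *
            ‖expTerm m j τ k (t * τ - s)‖ := by
          simp only [norm_mul, norm_neg, norm_real, norm_eq_abs, norm_I, norm_intCast,
            Complex.norm_two, abs_of_pos pi_pos]
          ring
      _ ≤ C * rexp (-π * erfArg m j τ k t ^ 2) * (2 * π * |(index m j k : ℝ)|) *
            ‖expTerm m j τ k (t * τ - s)‖ := by
          gcongr
          exact hcoeff t ht k
      _ = 2 * π * C * |(index m j k : ℝ)| *
            (rexp (-π * erfArg m j τ k t ^ 2) * ‖expTerm m j τ k (t * τ - s)‖) := by ring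
      _ ≤ 2 * π * C * |(index m j k : ℝ)| * decay m j τ (|a| + 1) k := by
          gcongr
          exact hdecay t ht k s
      _ ≤ _ := mul_le_mul_of_nonneg_right (le_add_of_nonneg_left (by positivity)) (exp_pos _).le

lemma exp_neg_sq_erfArg_mul_expTerm {τ : ℂ} (hy : 0 ≤ τ.im) (k : ℤ) (a b : ℝ) :
    (rexp (-π * erfArg m j τ k a ^ 2) : ℂ) * expTerm m j τ k (a * τ - b) =
      cexp (-(4 * (π : ℂ)) * ((m : ℂ) + 1) * (a : ℂ) ^ 2 * (τ.im : ℂ)) *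
        (cexp (2 * (π : ℂ) * I * ((m + 1 : ℕ) : ℂ) * (2 * (starRingEnd ℂ) (a * τ - b)) *
            (((-k : ℤ) : ℂ) + (j : ℂ) / (2 * ((m + 1 : ℕ) : ℂ)))) *
          cexp (2 * (π : ℂ) * I * (-(starRingEnd ℂ) τ) * ((m + 1 : ℕ) : ℂ) *
            (((-k : ℤ) : ℂ) + (j : ℂ) / (2 * ((m + 1 : ℕ) : ℂ))) ^ 2)) := by
  have hc : ((m : ℂ) + 1) ≠ 0 := by norm_cast
  have hconj : (starRingEnd ℂ) τ = τ - 2 * τ.im * I := by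
    have := sub_conj τ
    push_cast at this
    linear_combination -this
  rw [ofReal_exp, expTerm, ← Complex.exp_add, ← Complex.exp_add, ← Complex.exp_add, erfArg,
    mul_pow, sq_sqrt (div_nonneg hy (by positivity)), map_sub, map_mul, conj_ofReal, conj_ofReal,
    hconj, index]
  congr 1
  push_cast
  field_simp
  ring_nf
  rw [I_sq]
  ring

end Rz

/-- In the real coordinates `v = aτ − b`,
`(∂/∂a + τ ∂/∂b) R_{j;m+1}(τ,v) = −4√((m+1)y) e^{−4π(m+1)a²y} Θ_{j,m+1}(−τ̄, 2v̄)`,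
where `y = Im τ`. -/
theorem stmt8 (m : ℕ) (j : ℤ) (τ : ℂ) (hτ : 0 < τ.im) (a b : ℝ) :
    deriv (fun a' : ℝ => Rz m j τ ((a' : ℂ) * τ - (b : ℂ))) a +
        τ * deriv (fun b' : ℝ => Rz m j τ ((a : ℂ) * τ - (b' : ℂ))) b =
      -4 * ((Real.sqrt (((m : ℝ) + 1) * τ.im) : ℝ) : ℂ) *
        Complex.exp (-(4 * (Real.pi : ℂ)) * ((m : ℂ) + 1) * (a : ℂ) ^ 2 * (τ.im : ℂ)) *
        Theta j (m + 1) (-(starRingEnd ℂ) τ)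
          (2 * (starRingEnd ℂ) ((a : ℂ) * τ - (b : ℂ))) := by
  rw [Rz.deriv_add_mul_deriv_eq_tsum m j hτ, Theta, ← tsum_mul_left]
  conv_rhs => rw [← (Equiv.neg ℤ).tsum_eq]
  refine tsum_congr fun k ↦ ?_
  rw [ofReal_mul, mul_assoc, Rz.exp_neg_sq_erfArg_mul_expTerm m j hτ.le, Equiv.neg_apply]
  push_cast
  ring
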